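/- arXiv:1505.04596 — 6 statements merged into one kernel-verified Lean document; each statement's English description precedes it below -/
import Mathlib

section
/- Let A be a small category, E a reflective subcategory of presheaves on A through which the Yoneda embedding factors via Z : A → E, and F : A → C a functor into a cocomplete category. Then the left Kan extension of F along Z is isomorphic to the composite of the left Kan extension of F along the Yoneda embedding with the inclusion I : E → PSh(A). -/
/-!
If `R ⊣ I`, precomposition with `I` is left adjoint to precomposition with `R`, so `I ⋙ G` is
the left Kan extension of `G` along `R`. As the counit of a reflection is invertible,
`Z ≅ yoneda ⋙ reflector i`, and extending along `Z` amounts to extending along the Yoneda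
embedding and then along the reflector, which yields `i ⋙ L`.
-/

open CategoryTheory CategoryTheory.Limits

universe u v u'

namespace CategoryTheory.Adjunction

open CategoryTheory.Functor

variable {C D D' H : Type*} [Category C] [Category D] [Category D'] [Category H]
  {R : D ⥤ D'} {I : D' ⥤ D} (adj : R ⊣ I)

theorem isLeftKanExtension_whiskerLeft_unit_app (G : D ⥤ H) :
    (I ⋙ G).IsLeftKanExtension ((adj.whiskerLeft H).unit.app G) :=
  ⟨⟨mkInitialOfLeftAdjoint _ (adj.whiskerLeft H) G⟩⟩

theorem isLeftKanExtension_comp_of_iso {Y : C ⥤ D} {Z : C ⥤ D'} (e : Y ⋙ R ≅ Z)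
    {F : C ⥤ H} (L : D ⥤ H) (β : F ⟶ Y ⋙ L) [L.IsLeftKanExtension β] :
    (I ⋙ L).IsLeftKanExtension (β ≫ whiskerLeft Y ((adj.whiskerLeft H).unit.app L) ≫
      (Functor.associator _ _ _).inv ≫ whiskerRight e.hom (I ⋙ L)) :=
  (isLeftKanExtension_iff_postcompose β Z e _ _).1 (adj.isLeftKanExtension_whiskerLeft_unit_app L)

end CategoryTheory.Adjunction

theorem lan_along_Z_iso_lan_yoneda_comp_inclusion_general
    {A : Type u} [SmallCategory A] {E : Type u'} [Category.{v} E]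
    (i : E ⥤ (Aᵒᵖ ⥤ Type u)) [Reflective i]
    (Z : A ⥤ E) (hZ : Z ⋙ i ≅ yoneda)
    {C : Type*} [Category C]
    (F : A ⥤ C) (L : (Aᵒᵖ ⥤ Type u) ⥤ C) (β : F ⟶ yoneda ⋙ L)
    [L.IsLeftKanExtension β] :
    ∃ α : F ⟶ Z ⋙ (i ⋙ L), (i ⋙ L).IsLeftKanExtension α := by
  let adj := reflectorAdjunction i
  let e : yoneda ⋙ reflector i ≅ Z :=
    Functor.isoWhiskerRight hZ.symm _ ≪≫ Functor.associator _ _ _ ≪≫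
      Functor.isoWhiskerLeft Z (asIso adj.counit) ≪≫ Z.rightUnitor
  exact ⟨_, adj.isLeftKanExtension_comp_of_iso e L β⟩

/-- Let `E` be a reflective subcategory of presheaves on a small category `A` through
which the Yoneda embedding factors via `Z : A ⥤ E`, and `F : A ⥤ C` a functor into a
cocomplete category.  If `L` is a left Kan extension of `F` along the Yoneda embedding
(witnessed by `β`), then the composite `i ⋙ L` of `L` with the inclusion `i : E ⥤ PSh A`
is a left Kan extension of `F` along `Z`. -/
theorem lan_along_Z_iso_lan_yoneda_comp_inclusion
    {A : Type u} [SmallCategory A] {E : Type u'} [Category.{v} E]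
    (i : E ⥤ (Aᵒᵖ ⥤ Type u)) [Reflective i]
    (Z : A ⥤ E) (hZ : Z ⋙ i ≅ yoneda)
    {C : Type*} [Category C] [HasColimits C]
    (F : A ⥤ C) (L : (Aᵒᵖ ⥤ Type u) ⥤ C) (β : F ⟶ yoneda ⋙ L)
    [L.IsLeftKanExtension β] :
    ∃ α : F ⟶ Z ⋙ (i ⋙ L), (i ⋙ L).IsLeftKanExtension α :=
  lan_along_Z_iso_lan_yoneda_comp_inclusion_general i Z hZ F L β
end

section
/- Let A be a small category, E a reflective subcategory of PSh(A) containing the representables, with corestricted Yoneda embedding Z : A → E, and let L : E → C be a left adjoint functor into a cocomplete category. Then L ∘ R is isomorphic to the left Kan extension of L ∘ Z along the Yoneda embedding, where R is the reflection. -/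
/-!
`reflector i ⋙ L` is a composite of left adjoints, so it preserves colimits, and a
colimit-preserving functor out of presheaves is the left Kan extension along `yoneda` of its
restriction to representables, because every presheaf is canonically a colimit of
representables. That restriction is `Z ⋙ L`, because `i` is fully faithful, so the counit
`i ⋙ reflector i ⟶ 𝟭 E` is an isomorphism.
-/

open CategoryTheory CategoryTheory.Limits

universe u v u'

namespace CategoryTheory.Presheaf

variable {A : Type u} [SmallCategory A] {ℰ : Type*} [Category ℰ]

lemma isLeftKanExtension_id_along_yoneda_of_preservesColimits (L : (Aᵒᵖ ⥤ Type u) ⥤ ℰ)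
    [PreservesColimitsOfSize.{u, u} L] :
    L.IsLeftKanExtension (𝟙 (yoneda ⋙ L)) :=
  Functor.LeftExtension.IsPointwiseLeftKanExtension.isLeftKanExtension
    (E := Functor.LeftExtension.mk L (𝟙 (yoneda ⋙ L))) fun P =>
      IsColimit.ofIsoColimit (isColimitOfPreserves L (isColimitTautologicalCocone P))
        (Cocone.ext (Iso.refl _) fun _ => (Category.comp_id _).trans (Category.id_comp _).symm)

lemma isLeftKanExtension_along_yoneda_of_preservesColimits (L : (Aᵒᵖ ⥤ Type u) ⥤ ℰ)
    {F : A ⥤ ℰ} (e : F ≅ yoneda ⋙ L) [PreservesColimitsOfSize.{u, u} L] :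
    L.IsLeftKanExtension e.hom :=
  (Functor.isLeftKanExtension_iff_of_iso₂ e.hom (𝟙 (yoneda ⋙ L)) e (Iso.refl L) (by simp)).2
    (isLeftKanExtension_id_along_yoneda_of_preservesColimits L)

end CategoryTheory.Presheaf

noncomputable def CategoryTheory.Reflective.isoCompReflector {A D E : Type*} [Category A]
    [Category D] [Category E] (i : E ⥤ D) [Reflective i] {Z : A ⥤ E} {G : A ⥤ D}
    (hZ : Z ⋙ i ≅ G) : Z ≅ G ⋙ reflector i :=
  (Functor.rightUnitor Z).symm ≪≫
    Functor.isoWhiskerLeft Z (asIso (reflectorAdjunction i).counit).symm ≪≫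
    (Functor.associator _ _ _).symm ≪≫ Functor.isoWhiskerRight hZ (reflector i)

theorem leftAdjoint_comp_reflector_isLeftKanExtension_general
    {A : Type u} [SmallCategory A] {E : Type u'} [Category.{v} E]
    (i : E ⥤ (Aᵒᵖ ⥤ Type u)) [Reflective i]
    (Z : A ⥤ E) (hZ : Z ⋙ i ≅ yoneda)
    {C : Type*} [Category C]
    (L : E ⥤ C) [L.IsLeftAdjoint] :
    ∃ α : (Z ⋙ L) ⟶ yoneda ⋙ (reflector i ⋙ L),
      (reflector i ⋙ L).IsLeftKanExtension α := by
  let e : Z ⋙ L ≅ yoneda ⋙ reflector i ⋙ L :=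
    Functor.isoWhiskerRight (Reflective.isoCompReflector i hZ) L ≪≫ Functor.associator _ _ _
  exact ⟨e.hom, Presheaf.isLeftKanExtension_along_yoneda_of_preservesColimits _ e⟩

/-- Let `E` be a reflective subcategory of presheaves on a small category `A`, containing
the representables via the corestricted Yoneda embedding `Z : A ⥤ E`, and let `L : E ⥤ C`
be a left adjoint into a cocomplete category.  Then `reflector i ⋙ L` (that is, `L ∘ R`)
is a left Kan extension of `Z ⋙ L` (that is, `L ∘ Z`) along the Yoneda embedding. -/
theorem leftAdjoint_comp_reflector_isLeftKanExtension
    {A : Type u} [SmallCategory A] {E : Type u'} [Category.{v} E]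
    (i : E ⥤ (Aᵒᵖ ⥤ Type u)) [Reflective i]
    (Z : A ⥤ E) (hZ : Z ⋙ i ≅ yoneda)
    {C : Type*} [Category C] [HasColimits C]
    (L : E ⥤ C) [L.IsLeftAdjoint] :
    ∃ α : (Z ⋙ L) ⟶ yoneda ⋙ (reflector i ⋙ L),
      (reflector i ⋙ L).IsLeftKanExtension α :=
  leftAdjoint_comp_reflector_isLeftKanExtension_general i Z hZ L
end

section
/- Let C be a symmetric monoidal closed abelian category with exact filtered colimits, and let A be a commutative algebra object in C that can be written as a filtered colimit of objects A_i admitting duals, via morphisms f_i : A_i → A, with compatible morphisms η_i : 𝟙 → A_i lifting the unit η : 𝟙 → A, such that each dual morphism η_i^∨ : A_i^∨ → 𝟙 is an epimorphism. Then A is faithfully flat: the functor A ⊗ − is exact and A ⊗ X ≅ 0 implies X ≅ 0. -/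
open CategoryTheory CategoryTheory.Limits MonoidalCategory

universe w v u

/-- The data of a filtered diagram of objects under the unit, with a cocone on an
object `A` and a compatible family of unit factorizations `η j : 𝟙_ C ⟶ D j`,
as in the definition of an Adams algebra. -/
structure AdamsDiagram (C : Type u) [Category.{v} C] [MonoidalCategory C]
    (A : C) (unit : 𝟙_ C ⟶ A) where
  J : Type w
  [cat : SmallCategory J]
  [filt : IsFiltered J]
  D : J ⥤ C
  η : ∀ j, 𝟙_ C ⟶ D.obj j
  ι : ∀ j, D.obj j ⟶ A
  ι_nat : ∀ {j j'} (f : j ⟶ j'), D.map f ≫ ι j' = ι j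
  η_nat : ∀ {j j'} (f : j ⟶ j'), η j ≫ D.map f = η j'
  η_unit : ∀ j, η j ≫ ι j = unit

attribute [instance] AdamsDiagram.cat AdamsDiagram.filt

namespace AdamsDiagram

variable {C : Type u} [Category.{v} C] [MonoidalCategory C] {A : C} {unit : 𝟙_ C ⟶ A}

/-- The cocone on `A` determined by an `AdamsDiagram`. -/
@[simps] def cocone (P : AdamsDiagram.{w} C A unit) : Cocone P.D where
  pt := A
  ι :=
    { app := fun j => P.ι j
      naturality := by intro j j' f; simpa using P.ι_nat f }

/-- The conditions exhibiting `A` as an Adams algebra: every object of the diagram has a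
(right) dual, the cocone is a colimit cocone, and the dual of each unit factorization
`η j` is an epimorphism. -/
def IsAdams (P : AdamsDiagram.{w} C A unit) : Prop :=
  (∀ j, Nonempty (HasRightDual (P.D.obj j))) ∧
  Nonempty (IsColimit P.cocone) ∧
  ∀ (j : P.J) (h : HasRightDual (P.D.obj j)),
    letI := h
    Epi ((P.η j)ᘁ)

end AdamsDiagram

/-!
Flatness: `A ⊗ -` is a left adjoint between abelian categories, so it is exact as soon as it
preserves monomorphisms. For a mono `f`, `A ⊗ f` is the filtered colimit of the `Aᵢ ⊗ f`; these are
monic since `Aᵢ ⊗ -` is also a right adjoint (to `Aᵢ^∨ ⊗ -`), and filtered colimits are exact.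

Faithfulness: `η ⊗ X : 𝟙 ⊗ X ⟶ A ⊗ X` is the filtered colimit of the `ηᵢ ⊗ X`. Tensoring with
`Aᵢ^∨` and evaluating turns `ηᵢ ⊗ X` into `ηᵢ^∨ ⊗ X`; by the interchange law, two maps `W ⟶ X`
identified by `ηᵢ ⊗ X` are identified by the epimorphism `ηᵢ^∨ ⊗ W`, hence are equal. So each
`ηᵢ ⊗ X` is monic, and by exactness of filtered colimits `X` embeds into `A ⊗ X`.
-/

section Abelian

variable {C : Type u} [Category.{v} C] [Abelian C] {D : Type*} [Category D] [Abelian D]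

lemma CategoryTheory.Functor.preservesFiniteLimits_of_isLeftAdjoint_of_preservesMonomorphisms
    (F : C ⥤ D) [F.IsLeftAdjoint] [F.PreservesMonomorphisms] : PreservesFiniteLimits F := by
  have : PreservesBinaryBiproducts F := preservesBinaryBiproducts_of_preservesBinaryCoproducts F
  have : F.Additive := F.additive_of_preservesBinaryBiproducts
  have : F.PreservesHomology := F.preservesHomology_of_preservesMonos_and_cokernels
  exact F.preservesFiniteLimits_of_preservesHomology

end Abelian

section Rigid

variable {C : Type u} [Category.{v} C] [MonoidalCategory C]

lemma whiskerLeft_whiskerRight_comp_evaluation_whiskerRight {D : C} [HasRightDual D]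
    (η : 𝟙_ C ⟶ D) (X : C) : Dᘁ ◁ η ▷ X ≫ (α_ Dᘁ D X).inv ≫ ε_ D Dᘁ ▷ X = Dᘁ ◁ (λ_ X).hom ≫ ηᘁ ▷ X := by
  have : η_ (𝟙_ C) (𝟙_ C)ᘁ = (ρ_ (𝟙_ C)).inv := rfl
  simp only [rightAdjointMate, this]
  monoidal

lemma mono_whiskerRight_of_epi_rightAdjointMate_whiskerRight {D : C} [HasRightDual D]
    (η : 𝟙_ C ⟶ D) (hη : ∀ W : C, Epi (ηᘁ ▷ W)) (X : C) : Mono (η ▷ X) := by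
  constructor
  intro W g₁ g₂ hg
  have key : ∀ g : W ⟶ 𝟙_ C ⊗ X, ηᘁ ▷ W ≫ 𝟙_ C ◁ (g ≫ (λ_ X).hom) =
      Dᘁ ◁ (g ≫ η ▷ X) ≫ (α_ Dᘁ D X).inv ≫ ε_ D Dᘁ ▷ X := by
    intro g
    refine (whisker_exchange _ _).symm.trans ?_
    rw [MonoidalCategory.whiskerLeft_comp, MonoidalCategory.whiskerLeft_comp, Category.assoc,
      Category.assoc, whiskerLeft_whiskerRight_comp_evaluation_whiskerRight]
  have : 𝟙_ C ◁ (g₁ ≫ (λ_ X).hom) = 𝟙_ C ◁ (g₂ ≫ (λ_ X).hom) := by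
    rw [← cancel_epi (ηᘁ ▷ W), key, key, hg]
  simpa using this

instance mono_whiskerLeft_of_hasRightDual (D : C) [HasRightDual D] {X Y : C} (f : X ⟶ Y)
    [Mono f] : Mono (D ◁ f) :=
  have : (tensorLeft D).IsRightAdjoint := (tensorLeftAdjunction D Dᘁ).isRightAdjoint
  (tensorLeft D).map_mono f

end Rigid

section FilteredColimits

variable {C : Type u} [Category.{v} C] [MonoidalCategory C] [BraidedCategory C]
  [MonoidalClosed C] [HasColimits C] [AB5 C]
  {J : Type v} [SmallCategory J] [IsFiltered J]

lemma CategoryTheory.Limits.IsColimit.mono_whiskerLeft {F : J ⥤ C} {c : Cocone F}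
    (hc : IsColimit c) {X Y : C} (f : X ⟶ Y) [∀ j, Mono (F.obj j ◁ f)] : Mono (c.pt ◁ f) :=
  let φ : F ⋙ tensorRight X ⟶ F ⋙ tensorRight Y :=
    { app j := F.obj j ◁ f
      naturality _ _ g := (whisker_exchange (F.map g) f).symm }
  have : Mono φ := NatTrans.mono_of_mono_app φ
  colim.map_mono' φ (isColimitOfPreserves (tensorRight X) hc)
    (isColimitOfPreserves (tensorRight Y) hc) _ fun j => (whisker_exchange (c.ι.app j) f).symm

lemma CategoryTheory.Limits.IsColimit.preservesFiniteLimits_tensorLeft [Abelian C] {F : J ⥤ C}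
    [∀ j, HasRightDual (F.obj j)] {c : Cocone F} (hc : IsColimit c) :
    PreservesFiniteLimits (tensorLeft c.pt) :=
  have : (tensorLeft c.pt).PreservesMonomorphisms := ⟨fun f _ => hc.mono_whiskerLeft f⟩
  (tensorLeft c.pt).preservesFiniteLimits_of_isLeftAdjoint_of_preservesMonomorphisms

end FilteredColimits

namespace AdamsDiagram

variable {C : Type u} [Category.{v} C] [MonoidalCategory C] [BraidedCategory C]
  [MonoidalClosed C] [HasColimits C] [AB5 C] {A : C} {unit : 𝟙_ C ⟶ A}
  (P : AdamsDiagram.{v} C A unit)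

lemma mono_unit_whiskerRight (hP : P.IsAdams) (X : C) : Mono (unit ▷ X) := by
  have : ∀ j, HasRightDual (P.D.obj j) := fun j => (hP.1 j).some
  have hc : IsColimit P.cocone := hP.2.1.some
  let φ : (Functor.const P.J).obj (𝟙_ C ⊗ X) ⟶ P.D ⋙ tensorRight X :=
    { app j := P.η j ▷ X
      naturality _ _ g := by simp [← comp_whiskerRight, P.η_nat g] }
  have : ∀ j, Mono (φ.app j) := fun j =>
    have := hP.2.2 j _
    mono_whiskerRight_of_epi_rightAdjointMate_whiskerRight _ (fun W => (tensorRight W).map_epi _) X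
  have : IsConnected P.J := IsFiltered.isConnected P.J
  have : Mono φ := NatTrans.mono_of_mono_app φ
  exact colim.map_mono' φ (isColimitConstCocone P.J _) (isColimitOfPreserves (tensorRight X) hc)
    _ fun j => by simp only [φ, ← P.η_unit j, comp_whiskerRight]; exact Category.id_comp _

end AdamsDiagram

/-- An Adams algebra in an abelian tensor category with exact filtered colimits is
faithfully flat: tensoring with it is exact (it preserves finite limits, colimits
being automatic), and `A ⊗ X ≅ 0` implies `X ≅ 0`. -/
theorem adamsAlgebra_faithfullyFlat
    {C : Type u} [Category.{v} C] [Abelian C]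
    [MonoidalCategory C] [SymmetricCategory C] [MonoidalClosed C]
    [HasColimits C] [AB5 C]
    (A : CommMon C) (P : AdamsDiagram.{v} C A.X (MonObj.one (X := A.X))) (hP : P.IsAdams) :
    PreservesFiniteLimits (tensorLeft A.X) ∧
      ∀ X : C, IsZero (A.X ⊗ X) → IsZero X := by
  have : ∀ j, HasRightDual (P.D.obj j) := fun j => (hP.1 j).some
  refine ⟨hP.2.1.some.preservesFiniteLimits_tensorLeft, fun X hX => ?_⟩
  have := P.mono_unit_whiskerRight hP X
  exact (hX.of_mono (MonObj.one ▷ X)).of_iso (λ_ X).symm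
end

section
/- Let C be an abelian tensor category with exact filtered colimits and let η_i : 𝟙 → A_i exhibit the commutative algebra A as an Adams algebra. Then for each index i the diagram A_i^∨ ⊗ A_i^∨ ⇉ A_i^∨ → 𝟙, with parallel morphisms A_i^∨ ⊗ η_i^∨ and η_i^∨ ⊗ A_i^∨ and final morphism η_i^∨, is a coequalizer diagram. -/
open CategoryTheory CategoryTheory.Limits MonoidalCategory

universe w v u

/-!
Since `e := η_iᘁ : A_iᘁ ⟶ 𝟙` is an epimorphism in an abelian category, it is the cokernel of its
kernel `k : K ⟶ A_iᘁ`, so it suffices that every `g` coequalizing the pair kills `K`. Precomposing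
the coequalizing identity with `k ▷ A_iᘁ` turns one side into `(K ◁ e) ≫ ρ ≫ k ≫ g` and the other
into a map through `(k ≫ e) ▷ A_iᘁ = 0`; since `K ◁ e` is again an epimorphism (tensoring is a left
adjoint), `k ≫ g = 0`.
-/

section

variable {C : Type u} [Category.{v} C] [MonoidalCategory C]

lemma whiskerLeft_rightUnitor_comp_eq_whiskerRight_leftUnitor_comp {X : C} (e : X ⟶ 𝟙_ C) :
    ((X ◁ e) ≫ (ρ_ X).hom) ≫ e = ((e ▷ X) ≫ (λ_ X).hom) ≫ e := by
  rw [Category.assoc, Category.assoc, ← rightUnitor_naturality, ← leftUnitor_naturality,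
    whisker_exchange_assoc, unitors_equal]

end

section

variable {C : Type u} [Category.{v} C] [Abelian C] [MonoidalCategory C]
  [∀ Z : C, (tensorLeft Z).PreservesEpimorphisms]
  [∀ Z : C, (tensorRight Z).PreservesZeroMorphisms]

lemma kernel_ι_comp_eq_zero_of_whiskers_comp_eq {X Z : C} (e : X ⟶ 𝟙_ C) [Epi e] (g : X ⟶ Z)
    (hg : ((X ◁ e) ≫ (ρ_ X).hom) ≫ g = ((e ▷ X) ≫ (λ_ X).hom) ≫ g) :
    kernel.ι e ≫ g = 0 := by
  have h : (kernel e ◁ e) ≫ (ρ_ (kernel e)).hom ≫ kernel.ι e ≫ g = (kernel e ◁ e) ≫ 0 :=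
    calc (kernel e ◁ e) ≫ (ρ_ (kernel e)).hom ≫ kernel.ι e ≫ g
        = (kernel.ι e ▷ X) ≫ ((X ◁ e) ≫ (ρ_ X).hom) ≫ g := by
          rw [Category.assoc, ← whisker_exchange_assoc, rightUnitor_naturality_assoc]
      _ = ((kernel.ι e ≫ e) ▷ X) ≫ (λ_ X).hom ≫ g := by
          rw [hg, comp_whiskerRight, Category.assoc, Category.assoc]
      _ = (kernel e ◁ e) ≫ 0 := by
          have hzero : (0 : kernel e ⟶ 𝟙_ C) ▷ X = 0 := (tensorRight X).map_zero _ _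
          rw [kernel.condition, hzero, zero_comp, comp_zero]
  have : Epi (kernel e ◁ e) := (tensorLeft (kernel e)).map_epi e
  simpa using (cancel_epi _).1 h

noncomputable def isColimitCoforkOfEpi {X : C} (e : X ⟶ 𝟙_ C) [Epi e] :
    IsColimit (Cofork.ofπ e (whiskerLeft_rightUnitor_comp_eq_whiskerRight_leftUnitor_comp e)) :=
  Cofork.IsColimit.mk _
    (fun s => Abelian.epiDesc e s.π (kernel_ι_comp_eq_zero_of_whiskers_comp_eq e s.π s.condition))
    (fun s => Abelian.comp_epiDesc e s.π _)
    (fun s m hm => (cancel_epi e).1 (by rw [Abelian.comp_epiDesc]; exact hm))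

end

theorem adamsAlgebra_dual_coequalizer_general
    {C : Type u} [Category.{v} C] [Abelian C]
    [MonoidalCategory C] [SymmetricCategory C] [MonoidalClosed C]
    (A : CommMon C) (P : AdamsDiagram.{v} C A.X (MonObj.one (X := A.X))) (hP : P.IsAdams) :
    ∀ (j : P.J) (h : HasRightDual (P.D.obj j)),
      letI := h
      ∃ w : (((P.D.obj j)ᘁ ◁ (P.η j)ᘁ) ≫ (ρ_ ((P.D.obj j)ᘁ)).hom) ≫ (P.η j)ᘁ =
          (((P.η j)ᘁ ▷ (P.D.obj j)ᘁ) ≫ (λ_ ((P.D.obj j)ᘁ)).hom) ≫ (P.η j)ᘁ,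
        Nonempty (IsColimit (Cofork.ofπ ((P.η j)ᘁ) w)) := by
  intro j h
  have : Epi ((P.η j)ᘁ) := hP.2.2 j h
  exact ⟨_, ⟨isColimitCoforkOfEpi _⟩⟩

/-- If `η j : 𝟙_ C ⟶ A j` exhibit `A` as an Adams algebra in an abelian tensor category
with exact filtered colimits, then for each `j` the diagram
`Aⱼᘁ ⊗ Aⱼᘁ ⇉ Aⱼᘁ ⟶ 𝟙` (with parallel maps `Aⱼᘁ ◁ (η j)ᘁ` and `(η j)ᘁ ▷ Aⱼᘁ`, followed
by unitors, and final map `(η j)ᘁ`) is a coequalizer diagram. -/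
theorem adamsAlgebra_dual_coequalizer
    {C : Type u} [Category.{v} C] [Abelian C]
    [MonoidalCategory C] [SymmetricCategory C] [MonoidalClosed C]
    [HasColimits C] [AB5 C]
    (A : CommMon C) (P : AdamsDiagram.{v} C A.X (MonObj.one (X := A.X))) (hP : P.IsAdams) :
    ∀ (j : P.J) (h : HasRightDual (P.D.obj j)),
      letI := h
      ∃ w : (((P.D.obj j)ᘁ ◁ (P.η j)ᘁ) ≫ (ρ_ ((P.D.obj j)ᘁ)).hom) ≫ (P.η j)ᘁ =
          (((P.η j)ᘁ ▷ (P.D.obj j)ᘁ) ≫ (λ_ ((P.D.obj j)ᘁ)).hom) ≫ (P.η j)ᘁ,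
        Nonempty (IsColimit (Cofork.ofπ ((P.η j)ᘁ) w)) :=
  adamsAlgebra_dual_coequalizer_general A P hP
end

section
/- Let C be an abelian tensor category with exact filtered colimits in which the unit object 𝟙 is finitely presentable, and let A be a faithfully flat commutative algebra in C whose underlying object is a filtered colimit of dualizable objects. Then A is an Adams algebra: one can choose the filtered diagram A_i with unit factorizations η_i : 𝟙 → A_i such that each η_i^∨ : A_i^∨ → 𝟙 is an epimorphism. -/
/-!
Since `𝟙` is finitely presentable, the unit `𝟙 ⟶ A` factors as `g : 𝟙 ⟶ A_{j₀}` through some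
stage; restricting the diagram to the final subcategory under `j₀` gives compatible unit
factorizations `η_j` at every stage. Each `η_jᘁ` is an epimorphism because `A ⊗ η_jᘁ` is a split
epimorphism, with section `A ⊗ 𝟙 ⟶ A ⊗ A_j ⊗ A_jᘁ ⟶ A ⊗ A_jᘁ` given by coevaluation followed by
multiplication in `A` (the right unit law makes it a section), and `A ⊗ -` is right exact and
conservative, hence reflects epimorphisms.
-/

open CategoryTheory CategoryTheory.Limits MonoidalCategory

universe w v u

open Opposite in
/-- An object of a category is finitely presentable if its covariant hom functor
preserves filtered colimits. -/
def IsFinitelyPresentable {C : Type u} [Category.{v} C] (X : C) : Prop :=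
  ∀ (J : Type v) [SmallCategory J] [IsFiltered J],
    PreservesColimitsOfShape J (coyoneda.obj (op X))

open Opposite in
lemma IsFinitelyPresentable.exists_comp_ι_eq {C : Type u} [Category.{v} C] {X : C}
    (hX : _root_.IsFinitelyPresentable X) {J : Type v} [SmallCategory J] [IsFiltered J]
    {F : J ⥤ C} {c : Cocone F} (hc : IsColimit c) (f : X ⟶ c.pt) :
    ∃ j, ∃ g : X ⟶ F.obj j, g ≫ c.ι.app j = f :=
  haveI := hX J
  Types.jointly_surjective _ (isColimitOfPreserves (coyoneda.obj (op X)) hc) f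

section Rigid

variable {C : Type u} [Category.{v} C] [MonoidalCategory C]

lemma isSplitEpi_whiskerLeft_rightAdjointMate {M : C} [MonObj M] {P : C} [HasRightDual P]
    (η : 𝟙_ C ⟶ P) (ι : P ⟶ M) (hηι : η ≫ ι = MonObj.one) :
    IsSplitEpi (M ◁ ((η)ᘁ)) := by
  refine ⟨⟨⟨M ◁ η_ P Pᘁ ≫ (α_ M P Pᘁ).inv ≫ ((M ◁ ι) ≫ MonObj.mul) ▷ Pᘁ, ?_⟩⟩⟩
  rw [Category.assoc, Category.assoc, ← whisker_exchange,
    ← associator_inv_naturality_right_assoc, ← MonoidalCategory.whiskerLeft_comp_assoc,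
    coevaluation_comp_rightAdjointMate, MonoidalCategory.whiskerLeft_comp_assoc,
    associator_inv_naturality_middle_assoc, ← comp_whiskerRight,
    ← MonoidalCategory.whiskerLeft_comp_assoc, hηι, MonObj.mul_one]
  change M ◁ (ρ_ (𝟙_ C)).inv ≫ (α_ M (𝟙_ C) (𝟙_ C)).inv ≫ (ρ_ M).hom ▷ 𝟙_ C = 𝟙 _
  monoidal

lemma epi_rightAdjointMate_of_comp_eq_one [HasPushouts C] {M : C} [MonObj M]
    [PreservesColimitsOfShape WalkingSpan (tensorLeft M)] [(tensorLeft M).ReflectsIsomorphisms]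
    {P : C} [HasRightDual P] {η : 𝟙_ C ⟶ P} {ι : P ⟶ M} (hηι : η ≫ ι = MonObj.one) :
    Epi ((η)ᘁ) := by
  have := reflectsColimitsOfShape_of_reflectsIsomorphisms (J := WalkingSpan) (G := tensorLeft M)
  have : Epi ((tensorLeft M).map ((η)ᘁ)) := (isSplitEpi_whiskerLeft_rightAdjointMate η ι hηι).epi
  exact (tensorLeft M).epi_of_epi_map this

end Rigid

namespace AdamsDiagram

variable {C : Type u} [Category.{v} C] [MonoidalCategory C] {J : Type w} [SmallCategory J]
  [IsFiltered J] {D : J ⥤ C} (c : Cocone D) {j₀ : J} {g : 𝟙_ C ⟶ D.obj j₀}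
  {unit : 𝟙_ C ⟶ c.pt}

def ofUnder (hg : g ≫ c.ι.app j₀ = unit) : AdamsDiagram.{w} C c.pt unit where
  J := Under j₀
  D := Under.forget j₀ ⋙ D
  η u := g ≫ D.map u.hom
  ι u := c.ι.app u.right
  ι_nat f := c.w f.right
  η_nat f := by dsimp; rw [Category.assoc, ← D.map_comp, Under.w f]
  η_unit u := by simpa using hg

variable {c}

noncomputable def isColimitOfUnder (hc : IsColimit c) (hg : g ≫ c.ι.app j₀ = unit) :
    IsColimit (ofUnder c hg).cocone :=
  (Functor.Final.isColimitWhiskerEquiv (Under.forget j₀) c).symm hc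

end AdamsDiagram

/-- In an abelian tensor category with exact filtered colimits and finitely presentable
unit, a faithfully flat commutative algebra whose underlying object is a filtered
colimit of dualizable objects is an Adams algebra. -/
theorem faithfullyFlat_filteredColimitOfDuals_isAdams
    {C : Type u} [Category.{v} C] [Abelian C]
    [MonoidalCategory C] [SymmetricCategory C] [MonoidalClosed C]
    (hunit : _root_.IsFinitelyPresentable (𝟙_ C))
    (A : CommMon C)
    (hcons : (tensorLeft A.X).ReflectsIsomorphisms)
    (J : Type v) [SmallCategory J] [IsFiltered J] (D : J ⥤ C)
    (hdual : ∀ j, Nonempty (HasRightDual (D.obj j)))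
    (ι : ∀ j, D.obj j ⟶ A.X)
    (hι : ∀ {j j'} (f : j ⟶ j'), D.map f ≫ ι j' = ι j)
    (hcolim : Nonempty (IsColimit (Cocone.mk A.X
      { app := fun j => ι j
        naturality := by intro j j' f; simpa using hι f }))) :
    ∃ Q : AdamsDiagram.{v} C A.X (MonObj.one (X := A.X)), Q.IsAdams := by
  obtain ⟨hc⟩ := hcolim
  obtain ⟨j₀, g, hg⟩ := IsFinitelyPresentable.exists_comp_ι_eq hunit hc MonObj.one
  let Q := AdamsDiagram.ofUnder _ hg
  exact ⟨Q, fun u => hdual u.right, ⟨AdamsDiagram.isColimitOfUnder hc hg⟩,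
    fun u _ => epi_rightAdjointMate_of_comp_eq_one (Q.η_unit u)⟩
end

section
/- Let R be a commutative ring containing ℚ, C an abelian tensor category over R with exact filtered colimits, M a dualizable object of C, and p : M → 𝟙 an epimorphism. Then for every i ≥ 0 the induced morphism on symmetric-group fixed points (p^{⊗i})^{Σ_i} : (M^{⊗i})^{Σ_i} → (𝟙^{⊗i})^{Σ_i} is an epimorphism. -/
open CategoryTheory CategoryTheory.Limits MonoidalCategory

universe v u

variable {C : Type u} [Category.{v} C] [MonoidalCategory C]

/-- The `n`-fold tensor power of an object, left-normalized. -/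
def tensorPow (X : C) : ℕ → C
  | 0 => 𝟙_ C
  | n + 1 => tensorPow X n ⊗ X

/-- The `n`-fold tensor power of a morphism. -/
def tensorPowMap {X Y : C} (f : X ⟶ Y) : ∀ n, tensorPow X n ⟶ tensorPow Y n
  | 0 => 𝟙 _
  | n + 1 => tensorPowMap f n ⊗ₘ f

/-- The automorphism of `X^{⊗ n}` permuting the tensor factors in positions
`k` and `k + 1` (`0`-indexed), induced by the braiding; the identity when
`k + 1 ≥ n`. -/
def swapTensorFactors [BraidedCategory C] (X : C) : (n k : ℕ) → (tensorPow X n ≅ tensorPow X n)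
  | 0, _ => Iso.refl _
  | 1, _ => Iso.refl _
  | n + 2, k =>
    if k = n then
      α_ (tensorPow X n) X X ≪≫ whiskerLeftIso (tensorPow X n) (β_ X X) ≪≫
        (α_ (tensorPow X n) X X).symm
    else
      whiskerRightIso (swapTensorFactors X (n + 1) k) X

/-- `m : F ⟶ X` exhibits `F` as the object of fixed points of the action `ρ` of a group
`G` on `X`. -/
structure IsFixedPoints {G : Type*} [Group G] {X : C} (ρ : G →* Aut X)
    (F : C) (m : F ⟶ X) : Prop where
  comm : ∀ g : G, m ≫ (ρ g).hom = m
  lift : ∀ {W : C} (f : W ⟶ X), (∀ g : G, f ≫ (ρ g).hom = f) →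
    ∃! l : W ⟶ F, l ≫ m = f

/-!
In characteristic zero the averaging operator `(1/|G|) • ∑ g, ρ g` of a finite group action
factors through the fixed points and restricts to the identity on them, so the fixed points
are a retract of the object, compatibly with equivariant maps. Hence the map induced on fixed
points by an equivariant epimorphism is a retract of it and again an epimorphism. The tensor
power `p^{⊗ i}` is an epimorphism since tensoring with an object is a left adjoint in a closed
braided monoidal category.
-/

theorem epi_tensorHom [BraidedCategory C] [MonoidalClosed C] {X Y X' Y' : C}
    (f : X ⟶ Y) (g : X' ⟶ Y') [Epi f] [Epi g] : Epi (f ⊗ₘ g) := by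
  have : Epi (f ▷ X') := (tensorRight X').map_epi f
  have : Epi (Y ◁ g) := (tensorLeft Y).map_epi g
  rw [MonoidalCategory.tensorHom_def]
  exact epi_comp _ _

theorem epi_tensorPowMap [BraidedCategory C] [MonoidalClosed C] {X Y : C}
    (f : X ⟶ Y) [Epi f] : ∀ n, Epi (tensorPowMap f n)
  | 0 => inferInstanceAs (Epi (𝟙 _))
  | n + 1 =>
    have := epi_tensorPowMap f n
    epi_tensorHom (tensorPowMap f n) f

section FixedPoints

variable {A : Type*} [Category* A]

theorem IsFixedPoints.mono {G : Type*} [Group G] {X F : A} {ρ : G →* Aut X}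
    {m : F ⟶ X} (h : IsFixedPoints ρ F m) : Mono m where
  right_cancellation a b hab := by
    obtain ⟨l, -, hl⟩ := h.lift (a ≫ m) fun g => by rw [Category.assoc, h.comm]
    rw [hl a rfl, hl b hab.symm]

variable (R : Type*) [Semiring R] [Algebra ℚ R] [Preadditive A] [Linear R A]
  {G : Type*} [Group G] [Fintype G]

noncomputable def averageHom {X : A} (ρ : G →* Aut X) : X ⟶ X :=
  algebraMap ℚ R (Fintype.card G : ℚ)⁻¹ • ∑ g, (ρ g).hom

theorem averageHom_comp {X : A} (ρ : G →* Aut X) (g : G) :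
    averageHom R ρ ≫ (ρ g).hom = averageHom R ρ := by
  rw [averageHom, Linear.smul_comp, Preadditive.sum_comp]
  congr 1
  exact Fintype.sum_equiv (Equiv.mulLeft g) _ _ fun h => by
    show (ρ h).hom ≫ (ρ g).hom = (ρ (g * h)).hom
    rw [map_mul]; rfl

theorem comp_averageHom_of_invariant {W X : A} {ρ : G →* Aut X} (f : W ⟶ X)
    (hf : ∀ g, f ≫ (ρ g).hom = f) : f ≫ averageHom R ρ = f := by
  have hcard : (Fintype.card G : ℚ) ≠ 0 := by exact_mod_cast Fintype.card_ne_zero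
  rw [averageHom, Linear.comp_smul, Preadditive.comp_sum, Finset.sum_congr rfl fun g _ => hf g,
    Finset.sum_const, Finset.card_univ, ← Nat.cast_smul_eq_nsmul R, smul_smul,
    ← map_natCast (algebraMap ℚ R), ← map_mul, inv_mul_cancel₀ hcard, map_one, one_smul]

theorem averageHom_comp_of_equivariant {X Y : A} {ρX : G →* Aut X} {ρY : G →* Aut Y}
    (f : X ⟶ Y) (hf : ∀ g, (ρX g).hom ≫ f = f ≫ (ρY g).hom) :
    averageHom R ρX ≫ f = f ≫ averageHom R ρY := by
  simp only [averageHom, Linear.smul_comp, Linear.comp_smul, Preadditive.sum_comp,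
    Preadditive.comp_sum, hf]

theorem IsFixedPoints.exists_retraction {X F : A} {ρ : G →* Aut X} {m : F ⟶ X}
    (h : IsFixedPoints ρ F m) : ∃ r : X ⟶ F, r ≫ m = averageHom R ρ ∧ m ≫ r = 𝟙 F := by
  obtain ⟨r, hr, -⟩ := h.lift (averageHom R ρ) (averageHom_comp R ρ)
  have := h.mono
  refine ⟨r, hr, ?_⟩
  rw [← cancel_mono m, Category.assoc, hr, Category.id_comp,
    comp_averageHom_of_invariant R m h.comm]

end FixedPoints

theorem IsFixedPoints.epi_of_equivariant (R : Type*) [Semiring R] [Algebra ℚ R]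
    {A : Type*} [Category* A] [Preadditive A] [Linear R A] {G : Type*} [Group G] [Fintype G]
    {X Y : A} {ρX : G →* Aut X} {ρY : G →* Aut Y}
    (f : X ⟶ Y) [Epi f] (hf : ∀ g, (ρX g).hom ≫ f = f ≫ (ρY g).hom)
    {FX FY : A} {mX : FX ⟶ X} {mY : FY ⟶ Y}
    (hX : IsFixedPoints ρX FX mX) (hY : IsFixedPoints ρY FY mY)
    (l : FX ⟶ FY) (hl : l ≫ mY = mX ≫ f) : Epi l := by
  obtain ⟨rX, hrX, -⟩ := hX.exists_retraction R
  obtain ⟨rY, hrY, hmrY⟩ := hY.exists_retraction R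
  have := hY.mono
  have : IsSplitEpi rY := ⟨⟨⟨mY, hmrY⟩⟩⟩
  have retract : rX ≫ l = f ≫ rY := by
    rw [← cancel_mono mY, Category.assoc, Category.assoc, hl, hrY, ← Category.assoc, hrX,
      averageHom_comp_of_equivariant R f hf]
  have : Epi (rX ≫ l) := retract ▸ epi_comp f rY
  exact epi_of_epi rX l

theorem fixedPoints_map_epi_of_epi_general
    (R : Type*) [CommRing R] [Algebra ℚ R]
    {C : Type u} [Category.{v} C] [Abelian C] [Linear R C]
    [MonoidalCategory C] [SymmetricCategory C] [MonoidalClosed C]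
    (M : C) (p : M ⟶ 𝟙_ C) [Epi p] (i : ℕ)
    -- the symmetric group actions permuting the tensor factors
    (ρM : Equiv.Perm (Fin i) →* Aut (tensorPow M i))
    (ρ1 : Equiv.Perm (Fin i) →* Aut (tensorPow (𝟙_ C) i))
    (hequiv : ∀ σ : Equiv.Perm (Fin i),
      (ρM σ).hom ≫ tensorPowMap p i = tensorPowMap p i ≫ (ρ1 σ).hom)
    -- the fixed points of the two actions
    (FM : C) (mM : FM ⟶ tensorPow M i) (hFM : IsFixedPoints ρM FM mM)
    (F1 : C) (m1 : F1 ⟶ tensorPow (𝟙_ C) i) (hF1 : IsFixedPoints ρ1 F1 m1) :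
    -- the induced morphism on fixed points is an epimorphism
    ∀ l : FM ⟶ F1, l ≫ m1 = mM ≫ tensorPowMap p i → Epi l := by
  have := epi_tensorPowMap p i
  exact hFM.epi_of_equivariant R (tensorPowMap p i) hequiv hF1

/-- Over a `ℚ`-algebra `R`, for an `R`-linear abelian tensor category `C` with exact
filtered colimits, a dualizable object `M` and an epimorphism `p : M ⟶ 𝟙`, the induced
morphism `(p^{⊗ i})^{Σ_i} : (M^{⊗ i})^{Σ_i} ⟶ (𝟙^{⊗ i})^{Σ_i}` on fixed points of the
symmetric group actions (which permute the tensor factors via the braiding) is an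
epimorphism, for every `i`. -/
theorem fixedPoints_map_epi_of_epi
    (R : Type*) [CommRing R] [Algebra ℚ R]
    {C : Type u} [Category.{v} C] [Abelian C] [Linear R C]
    [MonoidalCategory C] [SymmetricCategory C] [MonoidalClosed C]
    [MonoidalPreadditive C] [MonoidalLinear R C] [HasColimits C] [AB5 C]
    (M : C) [HasRightDual M] (p : M ⟶ 𝟙_ C) [Epi p] (i : ℕ)
    -- the symmetric group actions permuting the tensor factors
    (ρM : Equiv.Perm (Fin i) →* Aut (tensorPow M i))
    (hρM : ∀ (k : ℕ) (hk : k + 1 < i),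
      ρM (Equiv.swap ⟨k, Nat.lt_of_succ_lt hk⟩ ⟨k + 1, hk⟩) = swapTensorFactors M i k)
    (ρ1 : Equiv.Perm (Fin i) →* Aut (tensorPow (𝟙_ C) i))
    (hρ1 : ∀ (k : ℕ) (hk : k + 1 < i),
      ρ1 (Equiv.swap ⟨k, Nat.lt_of_succ_lt hk⟩ ⟨k + 1, hk⟩) = swapTensorFactors (𝟙_ C) i k)
    (hequiv : ∀ σ : Equiv.Perm (Fin i),
      (ρM σ).hom ≫ tensorPowMap p i = tensorPowMap p i ≫ (ρ1 σ).hom)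
    -- the fixed points of the two actions
    (FM : C) (mM : FM ⟶ tensorPow M i) (hFM : IsFixedPoints ρM FM mM)
    (F1 : C) (m1 : F1 ⟶ tensorPow (𝟙_ C) i) (hF1 : IsFixedPoints ρ1 F1 m1) :
    -- the induced morphism on fixed points is an epimorphism
    ∀ l : FM ⟶ F1, l ≫ m1 = mM ≫ tensorPowMap p i → Epi l :=
  fixedPoints_map_epi_of_epi_general R M p i ρM ρ1 hequiv FM mM hFM F1 m1 hF1
end
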